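/- arXiv:2512.05223 — 4 statements merged into one kernel-verified Lean document; each statement's English description precedes it below -/
import Mathlib

section
/- Let V be a finite vertex set, τ a finite color set, and consider vectors x : V × τ → ℝ. Let A be the linear map sending x to (∑_{i ∈ τ} x(v,i))_{v ∈ V}. Suppose s : V × τ → ℝ is the difference of characteristic vectors of two proper τ-colorings φ₁, φ₂ of a graph G on V, and suppose the graph G(s) with vertex set V(s) = {v : ∃ i, s(v,i) ≠ 0} and edge set E(s) = {uv ∈ E : ∃ i, s(u,i) + s(v,i) = 0 and s(u,i) ≠ 0} is disconnected with at least two nonempty components. Then s is not support-minimal: there exists a nonzero vector s' with supp(s') strictly contained in supp(s), A s' = 0, and s'(u,i) + s'(v,i) = 0 whenever s(u,i) + s(v,i) = 0 for uv ∈ E. -/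
/-!
Restrict `s` to the connected component of `G(s)` containing a vertex `u` of `V(s)`.
An edge condition `s(a,i) + s(b,i) = 0` either has `s(a,i) = s(b,i) = 0`, or makes `ab` an
edge of `G(s)`, so that `a` and `b` lie in the same component; either way the restriction
still satisfies it. Row sums are preserved since whole rows are kept or dropped, and a vertex
of `V(s)` outside the component witnesses that the support shrinks strictly.
-/

/-- The difference graph `G(s)` of a vector `s` on vertex-color pairs: `u` and `v` are
adjacent if they are adjacent in `G` and for some color `i`, `s(u,i) + s(v,i) = 0` with
`s(u,i) ≠ 0`. -/
def diffGraph {V τ : Type*} (G : SimpleGraph V) (s : V × τ → ℝ) : SimpleGraph V where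
  Adj u v := G.Adj u v ∧ ∃ i, s (u, i) + s (v, i) = 0 ∧ s (u, i) ≠ 0
  symm := ⟨by
    rintro u v ⟨ha, i, hsum, hne⟩
    exact ⟨ha.symm, i, by linarith, fun h => hne (by linarith)⟩⟩
  loopless := ⟨fun v hv => G.irrefl hv.1⟩

section

variable {V τ : Type*}

theorem sum_ite_eq_sub_ite_eq_eq_zero [Fintype τ] [DecidableEq τ] (φ₁ φ₂ : V → τ) (v : V) :
    ∑ i, ((if φ₂ v = i then (1 : ℝ) else 0) - (if φ₁ v = i then (1 : ℝ) else 0)) = 0 := by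
  simp [Finset.sum_sub_distrib]

namespace diffGraph

noncomputable def restrictComponent (G : SimpleGraph V) (s : V × τ → ℝ) (u : V) : V × τ → ℝ :=
  {p | (diffGraph G s).Reachable u p.1}.indicator s

variable {G : SimpleGraph V} {s : V × τ → ℝ}

open Classical in
theorem restrictComponent_apply (u : V) (p : V × τ) :
    restrictComponent G s u p = if (diffGraph G s).Reachable u p.1 then s p else 0 :=
  Set.indicator_apply _ _ _

theorem reachable_iff_of_add_eq_zero {u a b : V} {i : τ} (hab : G.Adj a b)
    (hsum : s (a, i) + s (b, i) = 0) (hs : s (a, i) ≠ 0) :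
    (diffGraph G s).Reachable u a ↔ (diffGraph G s).Reachable u b :=
  have hadj : (diffGraph G s).Reachable a b :=
    (show (diffGraph G s).Adj a b from ⟨hab, i, hsum, hs⟩).reachable
  ⟨fun h ↦ h.trans hadj, fun h ↦ h.trans hadj.symm⟩

theorem restrictComponent_add_eq_zero {u a b : V} {i : τ} (hab : G.Adj a b)
    (hsum : s (a, i) + s (b, i) = 0) :
    restrictComponent G s u (a, i) + restrictComponent G s u (b, i) = 0 := by
  by_cases hs : s (a, i) = 0
  · have hs' : s (b, i) = 0 := by linarith
    simp [restrictComponent_apply, hs, hs']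
  · have := reachable_iff_of_add_eq_zero (u := u) hab hsum hs
    by_cases hu : (diffGraph G s).Reachable u a
    · simpa [restrictComponent_apply, hu, this.mp hu] using hsum
    · simp [restrictComponent_apply, hu, this.not.mp hu]

theorem sum_restrictComponent_eq_zero [Fintype τ] (u v : V) (hrow : ∑ i, s (v, i) = 0) :
    ∑ i, restrictComponent G s u (v, i) = 0 := by
  by_cases hv : (diffGraph G s).Reachable u v <;> simp [restrictComponent_apply, hv, hrow]

theorem restrictComponent_ne_zero {u : V} {i : τ} (hu : s (u, i) ≠ 0) :
    restrictComponent G s u ≠ 0 := fun h ↦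
  hu (by simpa [restrictComponent_apply] using congrFun h (u, i))

theorem support_restrictComponent_ssubset {u w : V} {j : τ} (hw : s (w, j) ≠ 0)
    (huw : ¬ (diffGraph G s).Reachable u w) :
    Function.support (restrictComponent G s u) ⊂ Function.support s := by
  rw [restrictComponent, Set.support_indicator]
  exact (Set.ssubset_iff_of_subset Set.inter_subset_right).mpr
    ⟨(w, j), hw, fun h ↦ huw h.1⟩

end diffGraph

end

open diffGraph in
theorem stmt3_general {V τ : Type*} [Fintype τ] [DecidableEq τ] (G : SimpleGraph V)
    (φ₁ φ₂ : V → τ)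
    (s : V × τ → ℝ)
    (hs : s = fun p => (if φ₂ p.1 = p.2 then (1 : ℝ) else 0) -
      (if φ₁ p.1 = p.2 then (1 : ℝ) else 0))
    (hdisc : ∃ u w : V, (∃ i, s (u, i) ≠ 0) ∧ (∃ i, s (w, i) ≠ 0) ∧
      ¬ (diffGraph G s).Reachable u w) :
    ∃ s' : V × τ → ℝ, s' ≠ 0 ∧ {p | s' p ≠ 0} ⊂ {p | s p ≠ 0} ∧
      (∀ v, ∑ i, s' (v, i) = 0) ∧
      (∀ u v i, G.Adj u v → s (u, i) + s (v, i) = 0 → s' (u, i) + s' (v, i) = 0) := by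
  obtain ⟨u, w, ⟨i, hu⟩, ⟨j, hw⟩, huw⟩ := hdisc
  have hrow (v : V) : ∑ i, s (v, i) = 0 := by
    subst hs
    exact sum_ite_eq_sub_ite_eq_eq_zero φ₁ φ₂ v
  exact ⟨restrictComponent G s u, restrictComponent_ne_zero hu,
    support_restrictComponent_ssubset hw huw,
    fun v ↦ sum_restrictComponent_eq_zero u v (hrow v),
    fun _ _ _ hab hsum ↦ restrictComponent_add_eq_zero hab hsum⟩

/-- If the difference `s` of the characteristic vectors of two proper colorings has a
disconnected difference graph (at least two vertices of `V(s)` in different components),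
then `s` is not support-minimal for the fractional coloring system. -/
theorem stmt3 {V τ : Type*} [Fintype τ] [DecidableEq τ] (G : SimpleGraph V)
    (φ₁ φ₂ : V → τ)
    (h₁ : ∀ u v, G.Adj u v → φ₁ u ≠ φ₁ v)
    (h₂ : ∀ u v, G.Adj u v → φ₂ u ≠ φ₂ v)
    (s : V × τ → ℝ)
    (hs : s = fun p => (if φ₂ p.1 = p.2 then (1 : ℝ) else 0) -
      (if φ₁ p.1 = p.2 then (1 : ℝ) else 0))
    (hdisc : ∃ u w : V, (∃ i, s (u, i) ≠ 0) ∧ (∃ i, s (w, i) ≠ 0) ∧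
      ¬ (diffGraph G s).Reachable u w) :
    ∃ s' : V × τ → ℝ, s' ≠ 0 ∧ {p | s' p ≠ 0} ⊂ {p | s p ≠ 0} ∧
      (∀ v, ∑ i, s' (v, i) = 0) ∧
      (∀ u v i, G.Adj u v → s (u, i) + s (v, i) = 0 → s' (u, i) + s' (v, i) = 0) :=
  stmt3_general G φ₁ φ₂ s hs hdisc
end

section
/- Let G = (V,E) be a simple graph and B the matrix with rows indexed by nonempty subsets U ⊆ V, where row U is the characteristic vector of E(G[U]) (edges with both endpoints in U). A nonzero uniform-sign vector g : E → ℝ (all nonzero entries of the same sign) is a circuit of the system {x : Bx ≤ b} (i.e., Bg is support-minimal among {Bx : x ≠ 0}, up to scaling) if and only if g has exactly one nonzero entry. -/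
/-!
The row of `B` indexed by the endpoint set of an edge `f` sees only `f`, so that set lies in the
support of `B y` exactly when `y f ≠ 0`. Hence a vector `y` with `supp (B y) ⊆ supp (B g)` has its
support inside that of `g`. If `g` is supported on a single edge `e`, so is such a `y`, and then
`B y` and `B g` have the same support (the sets containing `e`): `g` is a circuit. Conversely, if
`g` has uniform sign, no cancellation occurs in `B g`, so for any `e` in its support the unit
vector at `e` gives a smaller support than `g` as soon as `g` has a second nonzero entry.
-/

/-- The row of the rank-inequality matrix indexed by `U ⊆ V`, applied to `g`:
`∑_{e ∈ E(G[U])} g(e)`. -/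
def rowSum {V : Type*} [Fintype V] [DecidableEq V] (G : SimpleGraph V) [DecidableRel G.Adj]
    (g : G.edgeSet → ℝ) (U : Finset V) : ℝ :=
  ∑ e : G.edgeSet, if ∀ v ∈ (e : Sym2 V), v ∈ U then g e else 0

/-- The support of `B g` for the rank-inequality matrix `B`: the nonempty sets `U` whose
rank row evaluates to a nonzero value on `g`. -/
def Bsupp {V : Type*} [Fintype V] [DecidableEq V] (G : SimpleGraph V) [DecidableRel G.Adj]
    (g : G.edgeSet → ℝ) : Set (Finset V) :=
  {U | U.Nonempty ∧ rowSum G g U ≠ 0}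

/-- A circuit of the rank-inequality system: a nonzero vector `g` such that `B g` is
support-minimal over `{B x : x ≠ 0}`. -/
def IsCircuit {V : Type*} [Fintype V] [DecidableEq V] (G : SimpleGraph V) [DecidableRel G.Adj]
    (g : G.edgeSet → ℝ) : Prop :=
  g ≠ 0 ∧ ∀ y : G.edgeSet → ℝ, y ≠ 0 → ¬ Bsupp G y ⊂ Bsupp G g

/-- The unit vector supported on the edge `e`. -/
def unitVec {V : Type*} [DecidableEq V] (G : SimpleGraph V) (e : G.edgeSet) :
    G.edgeSet → ℝ :=
  fun f => if f = e then 1 else 0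

/-- The spanning subgraph of `G` with edge set `R`. -/
def edgeSub {V : Type*} (G : SimpleGraph V) (R : Set G.edgeSet) : SimpleGraph V where
  Adj u v := u ≠ v ∧ ∃ e ∈ R, (e : Sym2 V) = s(u, v)
  symm := by
    constructor
    rintro u v ⟨huv, e, heR, he⟩
    exact ⟨huv.symm, e, heR, by rw [he, Sym2.eq_swap]⟩
  loopless := by constructor; rintro v ⟨hv, _⟩; exact hv rfl

theorem Sym2.eq_of_not_isDiag_of_forall_mem {α : Type*} {z z' : Sym2 α} (hz : ¬z.IsDiag)
    (h : ∀ v ∈ z, v ∈ z') : z = z' := by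
  induction z using Sym2.ind with
  | _ a b =>
    have hab : a ≠ b := fun hab => hz (Sym2.mk_isDiag_iff.mpr hab)
    exact Sym2.eq_of_ne_mem hab (by simp) (by simp) (h a (by simp)) (h b (by simp))

lemma unitVec_of_ne {V : Type*} [DecidableEq V] {G : SimpleGraph V} {e f : G.edgeSet}
    (hfe : f ≠ e) : unitVec G e f = 0 :=
  if_neg hfe

lemma unitVec_self {V : Type*} [DecidableEq V] {G : SimpleGraph V} (e : G.edgeSet) :
    unitVec G e e = 1 :=
  if_pos rfl

section RankSystem

variable {V : Type*} [Fintype V] [DecidableEq V] {G : SimpleGraph V} [DecidableRel G.Adj]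

lemma rowSum_of_forall_ne_eq_zero {y : G.edgeSet → ℝ} {e : G.edgeSet}
    (hy : ∀ f, f ≠ e → y f = 0) (U : Finset V) :
    rowSum G y U = if ∀ v ∈ (e : Sym2 V), v ∈ U then y e else 0 :=
  Fintype.sum_eq_single e fun f hf => by simp [hy f hf]

lemma rowSum_toFinset (y : G.edgeSet → ℝ) (f : G.edgeSet) :
    rowSum G y (f : Sym2 V).toFinset = y f := by
  rw [rowSum, Fintype.sum_eq_single f]
  · simp [Sym2.mem_toFinset]
  · intro e hef
    rw [if_neg]
    intro he
    exact hef <| Subtype.ext <| Sym2.eq_of_not_isDiag_of_forall_mem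
      (G.not_isDiag_of_mem_edgeSet e.2) (by simpa [Sym2.mem_toFinset] using he)

lemma toFinset_mem_Bsupp_iff (y : G.edgeSet → ℝ) (f : G.edgeSet) :
    (f : Sym2 V).toFinset ∈ Bsupp G y ↔ y f ≠ 0 := by
  simp [Bsupp, rowSum_toFinset, Finset.nonempty_iff_ne_empty, Sym2.toFinset_ne_empty]

lemma Bsupp_of_forall_ne_eq_zero {y : G.edgeSet → ℝ} {e : G.edgeSet}
    (hy : ∀ f, f ≠ e → y f = 0) (he : y e ≠ 0) :
    Bsupp G y = {U | U.Nonempty ∧ ∀ v ∈ (e : Sym2 V), v ∈ U} := by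
  ext U
  by_cases hU : ∀ v ∈ (e : Sym2 V), v ∈ U <;>
    simp [Bsupp, rowSum_of_forall_ne_eq_zero hy, hU, he]

lemma rowSum_ne_zero_of_uniform_sign {g : G.edgeSet → ℝ}
    (huni : (∀ e, 0 ≤ g e) ∨ (∀ e, g e ≤ 0)) {f : G.edgeSet} (hf : g f ≠ 0) {U : Finset V}
    (hU : ∀ v ∈ (f : Sym2 V), v ∈ U) : rowSum G g U ≠ 0 := by
  intro h0
  have hfU : (if ∀ v ∈ (f : Sym2 V), v ∈ U then g f else 0) = 0 := by
    rcases huni with hpos | hneg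
    · exact (Finset.sum_eq_zero_iff_of_nonneg fun e _ => by split_ifs <;> simp [hpos e]).mp
        h0 f (Finset.mem_univ f)
    · exact (Finset.sum_eq_zero_iff_of_nonpos fun e _ => by split_ifs <;> simp [hneg e]).mp
        h0 f (Finset.mem_univ f)
  rw [if_pos hU] at hfU
  exact hf hfU

lemma Bsupp_unitVec_subset {g : G.edgeSet → ℝ} (huni : (∀ e, 0 ≤ g e) ∨ (∀ e, g e ≤ 0))
    {e : G.edgeSet} (he : g e ≠ 0) : Bsupp G (unitVec G e) ⊆ Bsupp G g := by
  rw [Bsupp_of_forall_ne_eq_zero (fun f => unitVec_of_ne) (by simp [unitVec_self])]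
  exact fun U ⟨hne, hU⟩ => ⟨hne, rowSum_ne_zero_of_uniform_sign huni he hU⟩

lemma eq_of_isCircuit_of_ne_zero {g : G.edgeSet → ℝ}
    (huni : (∀ e, 0 ≤ g e) ∨ (∀ e, g e ≤ 0)) (hc : IsCircuit G g) {e f : G.edgeSet}
    (he : g e ≠ 0) (hf : g f ≠ 0) : f = e := by
  by_contra hfe
  refine hc.2 (unitVec G e) (fun h0 => by simpa [unitVec_self] using congrFun h0 e)
    ⟨Bsupp_unitVec_subset huni he, fun hsub => ?_⟩
  exact (toFinset_mem_Bsupp_iff _ f).1 (hsub ((toFinset_mem_Bsupp_iff g f).2 hf))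
    (unitVec_of_ne hfe)

lemma isCircuit_of_forall_ne_zero_iff {g : G.edgeSet → ℝ} {e : G.edgeSet}
    (hg : ∀ f, g f ≠ 0 ↔ f = e) : IsCircuit G g := by
  have hge : g e ≠ 0 := (hg e).2 rfl
  refine ⟨fun h0 => hge (congrFun h0 e), fun y hy hsub => hsub.ne ?_⟩
  have hy_supp (f : G.edgeSet) (hf : y f ≠ 0) : f = e :=
    (hg f).1 <| (toFinset_mem_Bsupp_iff g f).1 <| hsub.1 <| (toFinset_mem_Bsupp_iff y f).2 hf
  have hye : y e ≠ 0 := by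
    obtain ⟨f, hf⟩ := Function.ne_iff.1 hy
    exact hy_supp f hf ▸ hf
  rw [Bsupp_of_forall_ne_eq_zero (fun f hfe => not_not.1 (mt (hy_supp f) hfe)) hye,
    Bsupp_of_forall_ne_eq_zero (fun f hfe => not_not.1 (mt (hg f).1 hfe)) hge]

end RankSystem

theorem stmt8_general {V : Type*} [Fintype V] [DecidableEq V] (G : SimpleGraph V)
    [DecidableRel G.Adj] (g : G.edgeSet → ℝ)
    (huni : (∀ e, 0 ≤ g e) ∨ (∀ e, g e ≤ 0)) :
    IsCircuit G g ↔ ∃ e, ∀ f, g f ≠ 0 ↔ f = e := by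
  refine ⟨fun hc => ?_, fun ⟨e, he⟩ => isCircuit_of_forall_ne_zero_iff he⟩
  obtain ⟨e, he⟩ := Function.ne_iff.1 hc.1
  exact ⟨e, fun f => ⟨fun hf => eq_of_isCircuit_of_ne_zero huni hc he hf, fun h => h ▸ he⟩⟩

/-- A nonzero uniform-sign vector is a circuit of the rank-inequality system if and only
if it has exactly one nonzero entry (i.e. it is a scaled unit vector). -/
theorem stmt8 {V : Type*} [Fintype V] [DecidableEq V] (G : SimpleGraph V)
    [DecidableRel G.Adj] (g : G.edgeSet → ℝ) (hg : g ≠ 0)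
    (huni : (∀ e, 0 ≤ g e) ∨ (∀ e, g e ≤ 0)) :
    IsCircuit G g ↔ ∃ e, ∀ f, g f ≠ 0 ↔ f = e :=
  stmt8_general G g huni
end

section
/- Let G = (V,E) be a simple graph and g a 0/±1 vector on E whose support forms a path in G on which edge signs strictly alternate (+1, −1, +1, ...), or an even cycle of length at least 4 with alternating signs. Then g is a circuit of the rank-inequality system (Rank): any nonzero vector y with supp(By) ⊊ supp(Bg) is impossible; equivalently, every nonzero y with By vanishing on all sets balanced w.r.t. g is a scalar multiple of g. -/
/-- The cyclic successor of an index. -/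
def cyclicSucc {n : ℕ} (i : Fin n) : Fin n :=
  ⟨((i : ℕ) + 1) % n, Nat.mod_lt _ i.pos⟩

/-!
Let `Bsupp y ⊊ Bsupp g`. Evaluating `B y` on the two endpoints of an edge reads off a single
coordinate, so `supp y ⊆ supp g`; evaluating it on a set `U` witnessing a balanced pair `(e, f)`
then gives `y e + y f = 0`. In an alternating path or even cycle of length at least 4, taking `U`
to be the four endpoints shows that every `+1`-edge forms a balanced pair with every `-1`-edge.
Hence `y = c • g` with `c ≠ 0`, and then `Bsupp y = Bsupp g`.
-/

lemma cyclicSucc_val {n : ℕ} (i : Fin n) :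
    (cyclicSucc i : ℕ) = if (i : ℕ) + 1 = n then 0 else (i : ℕ) + 1 := by
  simp only [cyclicSucc]
  split_ifs with h
  · rw [h, Nat.mod_self]
  · exact Nat.mod_eq_of_lt (by omega)

lemma Nat.mod_two_eq_zero_of_neg_one_pow_eq_one {n : ℕ} (h : (-1 : ℝ) ^ n = 1) : n % 2 = 0 :=
  Nat.even_iff.mp ((neg_one_pow_eq_one_iff_even (by norm_num)).mp h)

lemma Nat.mod_two_eq_one_of_neg_one_pow_eq_neg_one {n : ℕ} (h : (-1 : ℝ) ^ n = -1) :
    n % 2 = 1 :=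
  Nat.odd_iff.mp ((neg_one_pow_eq_neg_one_iff_odd (by norm_num)).mp h)

namespace SimpleGraph

variable {V : Type*} {G : SimpleGraph V}

variable (G) in
/-- The paper's balanced pair, oriented so that `e` is the `+1`-edge:
`E(G[U]) ∩ supp g = {e, f}` for some `U`. -/
def IsBalancedPair (g : G.edgeSet → ℝ) (e f : G.edgeSet) : Prop :=
  g e = 1 ∧ g f = -1 ∧
    ∃ U : Finset V, ∀ h : G.edgeSet, (g h ≠ 0 ∧ ∀ v ∈ (h : Sym2 V), v ∈ U) ↔ h = e ∨ h = f

section Alternating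

variable [DecidableEq V]

lemma isBalancedPair_of_edgeIndex {ι : Type*} {g : G.edgeSet → ℝ} {src tgt : ι → V}
    (hsupp : ∀ h : G.edgeSet, g h ≠ 0 ↔ ∃ k, (h : Sym2 V) = s(src k, tgt k))
    {e f : G.edgeSet} {i j : ι} (he : (e : Sym2 V) = s(src i, tgt i))
    (hf : (f : Sym2 V) = s(src j, tgt j)) (hge : g e = 1) (hgf : g f = -1)
    (hind : ∀ k, src k ∈ ({src i, tgt i, src j, tgt j} : Finset V) →
      tgt k ∈ ({src i, tgt i, src j, tgt j} : Finset V) → k = i ∨ k = j) :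
    IsBalancedPair G g e f := by
  refine ⟨hge, hgf, {src i, tgt i, src j, tgt j}, fun h => ⟨?_, ?_⟩⟩
  · rintro ⟨hg, hU⟩
    obtain ⟨k, hk⟩ := (hsupp h).mp hg
    rcases hind k (hU _ (by simp [hk])) (hU _ (by simp [hk])) with rfl | rfl
    · exact Or.inl (Subtype.ext (hk.trans he.symm))
    · exact Or.inr (Subtype.ext (hk.trans hf.symm))
  · rintro (rfl | rfl)
    · refine ⟨by simp [hge], fun v hv => ?_⟩
      rw [he, Sym2.mem_iff] at hv
      rcases hv with rfl | rfl <;> simp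
    · refine ⟨by simp [hgf], fun v hv => ?_⟩
      rw [hf, Sym2.mem_iff] at hv
      rcases hv with rfl | rfl <;> simp

lemma isBalancedPair_of_alternatingPath {g : G.edgeSet → ℝ} {m : ℕ} {vs : Fin (m + 1) → V}
    (hinj : Function.Injective vs)
    (hsupp : ∀ e : G.edgeSet, g e ≠ 0 ↔ ∃ i : Fin m, (e : Sym2 V) = s(vs i.castSucc, vs i.succ))
    (hsign : ∀ (e : G.edgeSet) (i : Fin m), (e : Sym2 V) = s(vs i.castSucc, vs i.succ) →
      g e = (-1) ^ (i : ℕ))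
    (e f : G.edgeSet) (he : g e = 1) (hf : g f = -1) : IsBalancedPair G g e f := by
  obtain ⟨i, hi⟩ := (hsupp e).mp (by simp [he])
  obtain ⟨j, hj⟩ := (hsupp f).mp (by simp [hf])
  have hi2 := Nat.mod_two_eq_zero_of_neg_one_pow_eq_one ((hsign e i hi).symm.trans he)
  have hj2 := Nat.mod_two_eq_one_of_neg_one_pow_eq_neg_one ((hsign f j hj).symm.trans hf)
  refine isBalancedPair_of_edgeIndex hsupp hi hj he hf fun k hk hk' => ?_
  simp only [Finset.mem_insert, Finset.mem_singleton, hinj.eq_iff, Fin.ext_iff,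
    Fin.val_castSucc, Fin.val_succ] at hk hk' ⊢
  omega

lemma isBalancedPair_of_alternatingCycle {g : G.edgeSet → ℝ} {m : ℕ} {vs : Fin (2 * m) → V}
    (hm : 2 ≤ m) (hinj : Function.Injective vs)
    (hsupp : ∀ e : G.edgeSet, g e ≠ 0 ↔
      ∃ i : Fin (2 * m), (e : Sym2 V) = s(vs i, vs (cyclicSucc i)))
    (hsign : ∀ (e : G.edgeSet) (i : Fin (2 * m)), (e : Sym2 V) = s(vs i, vs (cyclicSucc i)) →
      g e = (-1) ^ (i : ℕ))
    (e f : G.edgeSet) (he : g e = 1) (hf : g f = -1) : IsBalancedPair G g e f := by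
  obtain ⟨i, hi⟩ := (hsupp e).mp (by simp [he])
  obtain ⟨j, hj⟩ := (hsupp f).mp (by simp [hf])
  have hi2 := Nat.mod_two_eq_zero_of_neg_one_pow_eq_one ((hsign e i hi).symm.trans he)
  have hj2 := Nat.mod_two_eq_one_of_neg_one_pow_eq_neg_one ((hsign f j hj).symm.trans hf)
  refine isBalancedPair_of_edgeIndex (tgt := vs ∘ cyclicSucc) hsupp hi hj he hf
    fun k hk hk' => ?_
  simp only [Function.comp_apply, Finset.mem_insert, Finset.mem_singleton, hinj.eq_iff,
    Fin.ext_iff, cyclicSucc_val] at hk hk' ⊢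
  have := i.isLt; have := j.isLt; have := k.isLt
  split_ifs at hk hk' <;> (try simp only [false_or, or_false] at hk hk') <;> omega

end Alternating

section RankInequalities

variable [Fintype V] [DecidableEq V] [DecidableRel G.Adj]

lemma rowSum_eq_sum (y : G.edgeSet → ℝ) (U : Finset V) (s : Finset G.edgeSet)
    (hs : ∀ h ∈ s, ∀ v ∈ (h : Sym2 V), v ∈ U)
    (hout : ∀ h ∉ s, (∀ v ∈ (h : Sym2 V), v ∈ U) → y h = 0) :
    rowSum G y U = ∑ h ∈ s, y h := by
  unfold rowSum
  rw [← Finset.sum_filter]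
  refine (Finset.sum_subset (fun h hh => ?_) fun h hU hs => hout h hs ?_).symm
  · simpa using hs h hh
  · simpa using hU

lemma rowSum_endpoints (y : G.edgeSet → ℝ) (e : G.edgeSet) {u v : V}
    (he : (e : Sym2 V) = s(u, v)) :
    rowSum G y {u, v} = y e := by
  rw [rowSum_eq_sum y _ {e}, Finset.sum_singleton]
  · simp [he]
  · intro h hne hU
    refine absurd (Subtype.ext ?_) (Finset.notMem_singleton.mp hne)
    obtain ⟨⟨a, b⟩, hh⟩ := h
    have hab : a ≠ b := G.ne_of_adj hh
    have hmem : ∀ w ∈ s(a, b), w ∈ (e : Sym2 V) := fun w hw => by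
      simpa [he] using hU w hw
    exact Sym2.eq_of_ne_mem hab (Sym2.mem_mk_left a b) (Sym2.mem_mk_right a b)
      (hmem a (Sym2.mem_mk_left a b)) (hmem b (Sym2.mem_mk_right a b))

lemma rowSum_smul (c : ℝ) (g : G.edgeSet → ℝ) (U : Finset V) :
    rowSum G (c • g) U = c * rowSum G g U := by
  simp only [rowSum, Finset.mul_sum, Pi.smul_apply, smul_eq_mul, mul_ite, mul_zero]

lemma Bsupp_smul {c : ℝ} (hc : c ≠ 0) (g : G.edgeSet → ℝ) : Bsupp G (c • g) = Bsupp G g := by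
  ext U
  simp [Bsupp, rowSum_smul, hc]

section BsuppSubset

variable {g y : G.edgeSet → ℝ} (hsub : Bsupp G y ⊆ Bsupp G g)
include hsub

lemma eq_zero_of_Bsupp_subset {h : G.edgeSet} (hg : g h = 0) : y h = 0 := by
  obtain ⟨⟨a, b⟩, hab⟩ := h
  have hrow z := rowSum_endpoints (G := G) z ⟨s(a, b), hab⟩ rfl
  by_contra hy
  have hmem : ({a, b} : Finset V) ∈ Bsupp G y := ⟨⟨a, by simp⟩, by rwa [hrow]⟩
  exact (hsub hmem).2 (by rwa [hrow])

lemma add_eq_zero_of_Bsupp_subset {e f : G.edgeSet} (hef : IsBalancedPair G g e f) :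
    y e + y f = 0 := by
  obtain ⟨hge, hgf, U, hU⟩ := hef
  have hne : e ≠ f := fun h => by norm_num [h, hgf] at hge
  have hrow : ∀ z : G.edgeSet → ℝ, (∀ h, g h = 0 → z h = 0) → rowSum G z U = z e + z f := by
    intro z hz
    rw [rowSum_eq_sum z U {e, f}, Finset.sum_pair hne]
    · simp only [Finset.mem_insert, Finset.mem_singleton]
      exact fun h hh => ((hU h).mpr hh).2
    · intro h hh hin
      by_contra hzh
      exact hh (by simpa using (hU h).mp ⟨fun hg => hzh (hz h hg), hin⟩)
  obtain ⟨v, hv⟩ : ∃ v, v ∈ (e : Sym2 V) := ⟨_, Sym2.out_fst_mem _⟩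
  by_contra hy
  refine (hsub ⟨⟨v, ((hU e).mpr (Or.inl rfl)).2 v hv⟩, ?_⟩).2 ?_
  · rwa [hrow y fun h => eq_zero_of_Bsupp_subset hsub]
  · rw [hrow g fun h hg => hg, hge, hgf, add_neg_cancel]

end BsuppSubset

theorem isCircuit_of_forall_isBalancedPair {g : G.edgeSet → ℝ}
    (hpm : ∀ e, g e = 0 ∨ g e = 1 ∨ g e = -1)
    (hmix : (∃ e, g e = 1) ∧ (∃ e, g e = -1))
    (hbal : ∀ e f, g e = 1 → g f = -1 → IsBalancedPair G g e f) :
    IsCircuit G g := by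
  obtain ⟨⟨p, hp⟩, ⟨q, hq⟩⟩ := hmix
  refine ⟨fun h0 => by simp [h0] at hp, fun y hy hss => ?_⟩
  have hpair e f (he : g e = 1) (hf : g f = -1) : y e + y f = 0 :=
    add_eq_zero_of_Bsupp_subset hss.subset (hbal e f he hf)
  have hyg : y = y p • g := by
    funext e
    have := hpair p q hp hq
    rcases hpm e with he | he | he
    · simp [eq_zero_of_Bsupp_subset hss.subset he, he]
    · have := hpair e q he hq
      simp only [Pi.smul_apply, he, smul_eq_mul, mul_one]
      linarith
    · have := hpair p e hp he
      simp only [Pi.smul_apply, he, smul_eq_mul]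
      linarith
  have hyp : y p ≠ 0 := fun h0 => hy (by rw [hyg, h0, zero_smul])
  exact hss.ne (by rw [hyg, Bsupp_smul hyp])

end RankInequalities

end SimpleGraph

open SimpleGraph in
/-- A mixed-sign 0/±1 vector whose support is an alternating path, or an alternating
even cycle of length at least 4, is a circuit of the rank-inequality system. -/
theorem stmt13 {V : Type*} [Fintype V] [DecidableEq V] (G : SimpleGraph V)
    [DecidableRel G.Adj] (g : G.edgeSet → ℝ)
    (hpm : ∀ e, g e = 0 ∨ g e = 1 ∨ g e = -1)
    (hmix : (∃ e, g e = 1) ∧ (∃ e, g e = -1))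
    (hstruct :
      (∃ (m : ℕ) (vs : Fin (m + 1) → V), Function.Injective vs ∧
        (∀ i : Fin m, G.Adj (vs i.castSucc) (vs i.succ)) ∧
        (∀ e : G.edgeSet, g e ≠ 0 ↔
          ∃ i : Fin m, (e : Sym2 V) = s(vs i.castSucc, vs i.succ)) ∧
        (∀ (e : G.edgeSet) (i : Fin m), (e : Sym2 V) = s(vs i.castSucc, vs i.succ) →
          g e = (-1) ^ (i : ℕ))) ∨
      (∃ (m : ℕ) (vs : Fin (2 * m) → V), 2 ≤ m ∧ Function.Injective vs ∧
        (∀ i : Fin (2 * m), G.Adj (vs i) (vs (cyclicSucc i))) ∧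
        (∀ e : G.edgeSet, g e ≠ 0 ↔
          ∃ i : Fin (2 * m), (e : Sym2 V) = s(vs i, vs (cyclicSucc i))) ∧
        (∀ (e : G.edgeSet) (i : Fin (2 * m)), (e : Sym2 V) = s(vs i, vs (cyclicSucc i)) →
          g e = (-1) ^ (i : ℕ)))) :
    IsCircuit G g := by
  refine isCircuit_of_forall_isBalancedPair hpm hmix ?_
  rcases hstruct with ⟨m, vs, hinj, -, hsupp, hsign⟩ | ⟨m, vs, hm, hinj, -, hsupp, hsign⟩
  · exact isBalancedPair_of_alternatingPath hinj hsupp hsign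
  · exact isBalancedPair_of_alternatingCycle hm hinj hsupp hsign
end

section
/- Let G = (V,E) be a simple graph and g a 0/±1 vector whose support is an odd cycle of length at least 5 in G with exactly one vertex (the root) incident to two edges of the same sign, signs alternating elsewhere. Then g is a circuit of the rank-inequality system (Rank): every nonzero y satisfying y(e) + y(f) = 0 for every balanced pair (e,f) of g, and supported inside supp(g), is a scalar multiple of g. -/
/-- A balanced pair of edges `(e, f)` with respect to `g`: a pair of distinct edges for
which some set `U` is balanced with respect to `g` and the edges of `G[U]` in the
support of `g` are exactly `e` and `f`. -/
def BalancedPair {V : Type*} [Fintype V] [DecidableEq V] (G : SimpleGraph V)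
    [DecidableRel G.Adj] (g : G.edgeSet → ℝ) (e f : G.edgeSet) : Prop :=
  e ≠ f ∧ ∃ U : Finset V, rowSum G g U = 0 ∧
    ∀ h : G.edgeSet, (g h ≠ 0 ∧ ∀ v ∈ (h : Sym2 V), v ∈ U) ↔ (h = e ∨ h = f)

lemma cyclicSucc_ne_self {n : ℕ} (hn : 2 ≤ n) (i : Fin n) : cyclicSucc i ≠ i := by
  grind [Fin.ext_iff, cyclicSucc_val]

lemma cyclicSucc_castSucc {k : ℕ} (i : Fin k) : cyclicSucc i.castSucc = i.succ :=
  Fin.ext (Nat.mod_eq_of_lt (by simp))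

lemma mem_triple_and_cyclicSucc_mem_triple_iff {n : ℕ} (hn : 4 ≤ n) (i j : Fin n) :
    ((j = i ∨ j = cyclicSucc i ∨ j = cyclicSucc (cyclicSucc i)) ∧
      (cyclicSucc j = i ∨ cyclicSucc j = cyclicSucc i ∨
        cyclicSucc j = cyclicSucc (cyclicSucc i))) ↔ j = i ∨ j = cyclicSucc i := by
  grind [Fin.ext_iff, cyclicSucc_val]

lemma eq_neg_one_pow_mul_of_succ_eq_neg {R : Type*} [Ring R] {k : ℕ} (f : Fin (k + 1) → R)
    (h : ∀ i : Fin k, f i.succ = -f i.castSucc) (i : Fin (k + 1)) :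
    f i = (-1) ^ (i : ℕ) * f 0 := by
  induction i using Fin.induction with
  | zero => simp
  | succ i ih => rw [h, ih, Fin.val_succ, Fin.val_castSucc, pow_succ]; noncomm_ring

lemma rowSum_eq_add {V : Type*} [Fintype V] [DecidableEq V] {G : SimpleGraph V}
    [DecidableRel G.Adj] {g : G.edgeSet → ℝ} {e f : G.edgeSet} (hef : e ≠ f) {U : Finset V}
    (hU : ∀ x, (g x ≠ 0 ∧ ∀ v ∈ (x : Sym2 V), v ∈ U) ↔ x = e ∨ x = f) :
    rowSum G g U = g e + g f := by
  rw [rowSum, Fintype.sum_eq_add e f hef, if_pos ((hU e).2 (Or.inl rfl)).2,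
    if_pos ((hU f).2 (Or.inr rfl)).2]
  rintro x ⟨hxe, hxf⟩
  split_ifs with hxU
  · by_contra hgx
    rcases (hU x).1 ⟨hgx, hxU⟩ with rfl | rfl <;> contradiction
  · rfl

section Cycle

variable {V : Type*} {G : SimpleGraph V} {n : ℕ} {vs : Fin n → V}

def cycleEdge (hadj : ∀ i, G.Adj (vs i) (vs (cyclicSucc i))) (i : Fin n) : G.edgeSet :=
  ⟨s(vs i, vs (cyclicSucc i)), hadj i⟩

variable (hadj : ∀ i, G.Adj (vs i) (vs (cyclicSucc i)))

lemma cycleEdge_injective (hinj : Function.Injective vs) (hn : 3 ≤ n) :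
    Function.Injective (cycleEdge hadj) := by
  intro i j hij
  have hij : s(vs i, vs (cyclicSucc i)) = s(vs j, vs (cyclicSucc j)) := congrArg Subtype.val hij
  simp only [Sym2.eq_iff, hinj.eq_iff] at hij
  rcases hij with ⟨h, -⟩ | ⟨h, h'⟩
  · exact h
  · grind [Fin.ext_iff, cyclicSucc_val]

variable [DecidableEq V]

lemma forall_mem_cycleEdge_mem_triple_iff (hinj : Function.Injective vs) (hn : 4 ≤ n)
    (i j : Fin n) :
    (∀ v ∈ (cycleEdge hadj j : Sym2 V),
      v ∈ ({vs i, vs (cyclicSucc i), vs (cyclicSucc (cyclicSucc i))} : Finset V)) ↔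
      j = i ∨ j = cyclicSucc i := by
  simp only [cycleEdge, Sym2.forall_mem_pair, Finset.mem_insert, Finset.mem_singleton,
    hinj.eq_iff]
  exact mem_triple_and_cyclicSucc_mem_triple_iff hn i j

variable [Fintype V] [DecidableRel G.Adj]

/-- The witness `U` is the set of the three vertices covered by the two edges. -/
lemma balancedPair_cycleEdge (hinj : Function.Injective vs) (hn : 4 ≤ n)
    {g : G.edgeSet → ℝ}
    (hsupp : ∀ e : G.edgeSet, g e ≠ 0 ↔ ∃ i, (e : Sym2 V) = s(vs i, vs (cyclicSucc i)))
    (i : Fin n) (hsum : g (cycleEdge hadj i) + g (cycleEdge hadj (cyclicSucc i)) = 0) :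
    BalancedPair G g (cycleEdge hadj i) (cycleEdge hadj (cyclicSucc i)) := by
  have hne : cycleEdge hadj i ≠ cycleEdge hadj (cyclicSucc i) :=
    (cycleEdge_injective hadj hinj (by omega)).ne (cyclicSucc_ne_self (by omega) i).symm
  have hU : ∀ x, (g x ≠ 0 ∧ ∀ v ∈ (x : Sym2 V),
      v ∈ ({vs i, vs (cyclicSucc i), vs (cyclicSucc (cyclicSucc i))} : Finset V)) ↔
      x = cycleEdge hadj i ∨ x = cycleEdge hadj (cyclicSucc i) := by
    intro x
    constructor
    · rintro ⟨hx, hxU⟩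
      obtain ⟨j, hj⟩ := (hsupp x).1 hx
      obtain rfl : x = cycleEdge hadj j := Subtype.ext hj
      exact ((forall_mem_cycleEdge_mem_triple_iff hadj hinj hn i j).1 hxU).imp
        (congrArg _) (congrArg _)
    · intro hx
      obtain ⟨j, rfl, hj⟩ : ∃ j, x = cycleEdge hadj j ∧ (j = i ∨ j = cyclicSucc i) := by
        rcases hx with rfl | rfl <;> exact ⟨_, rfl, by simp⟩
      exact ⟨(hsupp _).2 ⟨j, rfl⟩, (forall_mem_cycleEdge_mem_triple_iff hadj hinj hn i j).2 hj⟩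
  exact ⟨hne, _, (rowSum_eq_add hne hU).trans hsum, hU⟩

end Cycle

/-- A 0/±1 vector whose support is a rooted alternating odd cycle of length at least 5
is a circuit of the rank-inequality system: any nonzero vector supported inside
`supp(g)` and vanishing on all balanced pairs of `g` is a scalar multiple of `g`. -/
theorem stmt14 {V : Type*} [Fintype V] [DecidableEq V] (G : SimpleGraph V)
    [DecidableRel G.Adj] (g : G.edgeSet → ℝ)
    (m : ℕ) (hm : 2 ≤ m) (vs : Fin (2 * m + 1) → V) (hinj : Function.Injective vs)
    (hadj : ∀ i : Fin (2 * m + 1), G.Adj (vs i) (vs (cyclicSucc i)))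
    (hsupp : ∀ e : G.edgeSet, g e ≠ 0 ↔
      ∃ i : Fin (2 * m + 1), (e : Sym2 V) = s(vs i, vs (cyclicSucc i)))
    (hsign : ∀ (e : G.edgeSet) (i : Fin (2 * m + 1)),
      (e : Sym2 V) = s(vs i, vs (cyclicSucc i)) → g e = (-1) ^ (i : ℕ)) :
    ∀ y : G.edgeSet → ℝ, y ≠ 0 → (∀ e, g e = 0 → y e = 0) →
      (∀ e f : G.edgeSet, BalancedPair G g e f → y e + y f = 0) →
      ∃ c : ℝ, y = c • g := by
  intro y _ hy_supp hy_pairs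
  set E := cycleEdge hadj
  have hgE : ∀ i, g (E i) = (-1) ^ (i : ℕ) := fun i => hsign (E i) i rfl
  have hy_alt : ∀ i : Fin (2 * m), y (E i.succ) = -y (E i.castSucc) := by
    intro i
    have hpair := balancedPair_cycleEdge hadj hinj (by omega) hsupp i.castSucc (by
      rw [cyclicSucc_castSucc, hgE, hgE, Fin.val_succ, Fin.val_castSucc, pow_succ]
      ring)
    rw [cyclicSucc_castSucc] at hpair
    exact eq_neg_of_add_eq_zero_right (hy_pairs _ _ hpair)
  refine ⟨y (E 0), funext fun e => ?_⟩
  by_cases hge : g e = 0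
  · simp [hy_supp e hge, hge]
  obtain ⟨j, hj⟩ := (hsupp e).1 hge
  obtain rfl : e = E j := Subtype.ext hj
  rw [Pi.smul_apply, smul_eq_mul, hgE]
  exact (eq_neg_one_pow_mul_of_succ_eq_neg (y ∘ E) hy_alt j).trans (mul_comm _ _)
end
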